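/- Let R = k[[x,y,z]]/(z²+x³+xy³) for a field k, and let φ₆ be the 2×2 matrix with rows (0, y³+x²) and (−x, 0). Then φ₆² = −(x³+xy³)·id₂, and the trace ideal of coker(z·id₂ − φ₆) over R equals (x, y³+x², z) = (x, y³, z). -/

import Mathlib

/-- The trace ideal of an `R`-module `M`: the sum of the images of all `R`-linear maps
`M → R`. -/
def traceIdeal (R : Type*) [CommRing R] (M : Type*) [AddCommGroup M] [Module R M] :
    Ideal R :=
  ⨆ f : M →ₗ[R] R, LinearMap.range f

/-- The two-dimensional `E₇`-singularity `R = k⟦x,y,z⟧/(z² + x³ + xy³)`. -/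
noncomputable abbrev E7 (k : Type*) [Field k] : Type _ :=
  MvPowerSeries (Fin 3) k ⧸
    Ideal.span {(MvPowerSeries.X 2 : MvPowerSeries (Fin 3) k) ^ 2
      + MvPowerSeries.X 0 ^ 3 + MvPowerSeries.X 0 * MvPowerSeries.X 1 ^ 3}

/-- The image of `x` in `R = k⟦x,y,z⟧/(z² + x³ + xy³)`. -/
noncomputable def x17 (k : Type*) [Field k] : E7 k :=
  Ideal.Quotient.mk _ (MvPowerSeries.X 0 : MvPowerSeries (Fin 3) k)

/-- The image of `y` in `R = k⟦x,y,z⟧/(z² + x³ + xy³)`. -/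
noncomputable def y17 (k : Type*) [Field k] : E7 k :=
  Ideal.Quotient.mk _ (MvPowerSeries.X 1 : MvPowerSeries (Fin 3) k)

/-- The image of `z` in `R = k⟦x,y,z⟧/(z² + x³ + xy³)`. -/
noncomputable def z17 (k : Type*) [Field k] : E7 k :=
  Ideal.Quotient.mk _ (MvPowerSeries.X 2 : MvPowerSeries (Fin 3) k)

open MvPowerSeries Finsupp in
lemma E7aux_g_ne_zero (k : Type*) [Field k] :
    (X 2 : MvPowerSeries (Fin 3) k) ^ 2 + X 0 ^ 3 + X 0 * X 1 ^ 3 ≠ 0 := by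
  intro h
  have hne : ((single 2 2 : Fin 3 →₀ ℕ)) ≠ single 0 1 + single 1 3 := by
    intro h'; have := DFunLike.congr_fun h' 2; simp at this
  have hprod : (X 0 * X 1 ^ 3 : MvPowerSeries (Fin 3) k)
      = MvPowerSeries.monomial (single 0 1 + single 1 3) 1 := by
    rw [X_pow_eq, X, monomial_mul_monomial, one_mul]
  have h2 := congrArg (MvPowerSeries.coeff (single 2 2)) h
  rw [map_add, map_add, coeff_X_pow, coeff_X_pow, hprod, coeff_monomial] at h2
  simp [Finsupp.single_eq_single_iff, hne] at h2

lemma E7aux_rel (k : Type*) [Field k] :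
    z17 k ^ 2 + x17 k ^ 3 + x17 k * y17 k ^ 3 = 0 := by
  have : (z17 k ^ 2 + x17 k ^ 3 + x17 k * y17 k ^ 3 : E7 k)
      = Ideal.Quotient.mk _ ((MvPowerSeries.X 2 : MvPowerSeries (Fin 3) k) ^ 2
        + MvPowerSeries.X 0 ^ 3 + MvPowerSeries.X 0 * MvPowerSeries.X 1 ^ 3) := by
    rw [x17, y17, z17, ← map_pow, ← map_pow, ← map_pow, ← map_mul, ← map_add, ← map_add]
  rw [this, Ideal.Quotient.eq_zero_iff_mem]
  exact Ideal.subset_span rfl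



set_option maxHeartbeats 1000000 in
lemma E7aux_lift (k : Type*) [Field k] (u v : E7 k)
    (h1 : z17 k * u + x17 k * v = 0)
    (h2 : -((y17 k) ^ 3 + (x17 k) ^ 2) * u + z17 k * v = 0) :
    u ∈ Ideal.span {x17 k, (y17 k) ^ 3 + (x17 k) ^ 2, z17 k} ∧
      v ∈ Ideal.span {x17 k, (y17 k) ^ 3 + (x17 k) ^ 2, z17 k} := by
  obtain ⟨U, hU⟩ := Ideal.Quotient.mk_surjective u
  obtain ⟨V, hV⟩ := Ideal.Quotient.mk_surjective v
  set X0 : MvPowerSeries (Fin 3) k := MvPowerSeries.X 0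
  set X1 : MvPowerSeries (Fin 3) k := MvPowerSeries.X 1
  set X2 : MvPowerSeries (Fin 3) k := MvPowerSeries.X 2
  set g : MvPowerSeries (Fin 3) k := X2 ^ 2 + X0 ^ 3 + X0 * X1 ^ 3 with hg
  set mk : MvPowerSeries (Fin 3) k →+* E7 k := Ideal.Quotient.mk (Ideal.span {g}) with hmk
  have hgne : g ≠ 0 := E7aux_g_ne_zero k
  have hxmk : x17 k = mk X0 := rfl
  have hymk : y17 k = mk X1 := rfl
  have hzmk : z17 k = mk X2 := rfl
  have hxI : x17 k ∈ Ideal.span {x17 k, (y17 k) ^ 3 + (x17 k) ^ 2, z17 k} :=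
    Ideal.subset_span (by simp)
  have hpI : (y17 k) ^ 3 + (x17 k) ^ 2 ∈ Ideal.span {x17 k, (y17 k) ^ 3 + (x17 k) ^ 2, z17 k} :=
    Ideal.subset_span (by simp)
  have hzI : z17 k ∈ Ideal.span {x17 k, (y17 k) ^ 3 + (x17 k) ^ 2, z17 k} :=
    Ideal.subset_span (by simp)
  have hmem1 : X2 * U + X0 * V ∈ Ideal.span ({g} : Set (MvPowerSeries (Fin 3) k)) := by
    rw [← Ideal.Quotient.eq_zero_iff_mem]
    show mk (X2 * U + X0 * V) = 0
    rw [map_add, map_mul, map_mul, hU, hV, ← hxmk, ← hzmk, h1]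
  have hmem2 : -(X1 ^ 3 + X0 ^ 2) * U + X2 * V ∈ Ideal.span ({g} : Set (MvPowerSeries (Fin 3) k)) := by
    rw [← Ideal.Quotient.eq_zero_iff_mem]
    show mk (-(X1 ^ 3 + X0 ^ 2) * U + X2 * V) = 0
    rw [map_add, map_mul, map_mul, map_neg, map_add, map_pow, map_pow, hU, hV,
      ← hxmk, ← hymk, ← hzmk, h2]
  obtain ⟨A, hA⟩ := Ideal.mem_span_singleton'.mp hmem1
  obtain ⟨B, hB⟩ := Ideal.mem_span_singleton'.mp hmem2
  have hUeq : U = X2 * A - X0 * B := by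
    refine mul_left_cancel₀ hgne ?_
    rw [hg]; linear_combination X0 * hB - X2 * hA
  have hVeq : V = (X1 ^ 3 + X0 ^ 2) * A + X2 * B := by
    refine mul_left_cancel₀ hgne ?_
    rw [hg]; linear_combination -((X1 ^ 3 + X0 ^ 2) * hA) - X2 * hB
  constructor
  · rw [← hU, hUeq, map_sub, map_mul, map_mul, ← hxmk, ← hzmk]
    exact sub_mem (Ideal.mul_mem_right _ _ hzI) (Ideal.mul_mem_right _ _ hxI)
  · rw [← hV, hVeq, map_add, map_mul, map_mul, map_add, map_pow, map_pow,
      ← hxmk, ← hymk, ← hzmk]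
    exact add_mem (Ideal.mul_mem_right _ _ hpI) (Ideal.mul_mem_right _ _ hzI)


set_option maxHeartbeats 1600000 in
/-- Let `R = k⟦x,y,z⟧/(z² + x³ + xy³)` for a field `k`, and
`φ₆ = !![0, y³ + x²; -x, 0]`.  Then `φ₆² = -(x³ + xy³) • id₂`, and the trace ideal of
`coker(z·id₂ - φ₆)` over `R` equals `(x, y³ + x², z) = (x, y³, z)`. -/
theorem traceIdeal_E7
    (k : Type*) [Field k] :
    (!![0, (y17 k) ^ 3 + (x17 k) ^ 2; -x17 k, 0]
        * !![0, (y17 k) ^ 3 + (x17 k) ^ 2; -x17 k, 0]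
        = -(((x17 k) ^ 3 + x17 k * (y17 k) ^ 3) • (1 : Matrix (Fin 2) (Fin 2) (E7 k)))) ∧
      traceIdeal (E7 k) ((Fin 2 → E7 k) ⧸ LinearMap.range (Matrix.mulVecLin
          (z17 k • (1 : Matrix (Fin 2) (Fin 2) (E7 k))
            - !![0, (y17 k) ^ 3 + (x17 k) ^ 2; -x17 k, 0])))
        = Ideal.span {x17 k, (y17 k) ^ 3 + (x17 k) ^ 2, z17 k} ∧
      Ideal.span {x17 k, (y17 k) ^ 3 + (x17 k) ^ 2, z17 k}
        = Ideal.span {x17 k, (y17 k) ^ 3, z17 k} := by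
  have hrel : z17 k ^ 2 + x17 k ^ 3 + x17 k * y17 k ^ 3 = 0 := E7aux_rel k
  set x := x17 k with hxdef
  set y := y17 k with hydef
  set z := z17 k with hzdef
  refine ⟨?_, ?_, ?_⟩
  · ext i j
    fin_cases i <;> fin_cases j <;>
      simp [Matrix.mul_apply, Fin.sum_univ_two, Matrix.one_apply] <;> ring
  · set p : E7 k := y ^ 3 + x ^ 2 with hp
    set ψ : Matrix (Fin 2) (Fin 2) (E7 k) :=
      z • (1 : Matrix (Fin 2) (Fin 2) (E7 k)) - !![0, p; -x, 0] with hψdef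
    have hψ : ψ = !![z, -p; x, z] := by
      ext i j
      fin_cases i <;> fin_cases j <;> simp [hψdef, Matrix.one_apply]
    set I : Ideal (E7 k) := Ideal.span {x, p, z} with hI
    have hxI : x ∈ I := Ideal.subset_span (by simp)
    have hpI : p ∈ I := Ideal.subset_span (by simp)
    have hzI : z ∈ I := Ideal.subset_span (by simp)
    set N := LinearMap.range ψ.mulVecLin with hN
    have hcol : ∀ w : Fin 2 → E7 k,
        (Submodule.Quotient.mk (ψ.mulVec w) : (Fin 2 → E7 k) ⧸ N) = 0 := by
      intro w
      rw [Submodule.Quotient.mk_eq_zero]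
      exact ⟨w, rfl⟩
    apply le_antisymm
    · apply iSup_le
      intro f
      rintro r ⟨m, rfl⟩
      obtain ⟨w, rfl⟩ := Submodule.Quotient.mk_surjective N m
      set F : (Fin 2 → E7 k) →ₗ[E7 k] E7 k := f.comp N.mkQ with hF
      have hFval : ∀ w : Fin 2 → E7 k,
          F w = w 0 * F (fun j => if 0 = j then 1 else 0)
              + w 1 * F (fun j => if 1 = j then 1 else 0) := by
        intro w
        rw [F.pi_apply_eq_sum_univ w, Fin.sum_univ_two]
        simp [smul_eq_mul]
      set u := F (fun j => if 0 = j then 1 else 0) with hu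
      set v := F (fun j => if 1 = j then 1 else 0) with hv
      have hker : ∀ w : Fin 2 → E7 k, F (ψ.mulVec w) = 0 := by
        intro w
        have : F (ψ.mulVec w) = f (Submodule.Quotient.mk (ψ.mulVec w)) := rfl
        rw [this, hcol, map_zero]
      have h1 : z * u + x * v = 0 := by
        have := hker (fun j => if 0 = j then 1 else 0)
        rw [hFval] at this
        simpa [hψ, Matrix.mulVec, dotProduct, Fin.sum_univ_two] using this
      have h2 : -p * u + z * v = 0 := by
        have := hker (fun j => if 1 = j then 1 else 0)
        rw [hFval] at this
        simpa [hψ, Matrix.mulVec, dotProduct, Fin.sum_univ_two] using this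
      obtain ⟨huI, hvI⟩ := E7aux_lift k u v h1 h2
      have : f (Submodule.Quotient.mk w) = w 0 * u + w 1 * v := hFval w
      rw [this]
      exact add_mem (Ideal.mul_mem_left _ _ huI) (Ideal.mul_mem_left _ _ hvI)
    · rw [hI, Ideal.span_le]
      have mk_maps : ∀ (a b : E7 k),
          (∀ w : Fin 2 → E7 k, a * ψ.mulVec w 0 + b * ψ.mulVec w 1 = 0) →
          ∀ c : E7 k, (∃ w : Fin 2 → E7 k, a * w 0 + b * w 1 = c) →
          c ∈ traceIdeal (E7 k) ((Fin 2 → E7 k) ⧸ N) := by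
        rintro a b hab c ⟨w, hw⟩
        set f0 : (Fin 2 → E7 k) →ₗ[E7 k] E7 k :=
          a • LinearMap.proj 0 + b • LinearMap.proj 1 with hf0
        have hker : N ≤ LinearMap.ker f0 := by
          rintro _ ⟨w', rfl⟩
          simp only [LinearMap.mem_ker, hf0, LinearMap.add_apply, LinearMap.smul_apply,
            LinearMap.proj_apply, smul_eq_mul, Matrix.mulVecLin_apply]
          exact hab w'
        refine le_iSup (fun f : ((Fin 2 → E7 k) ⧸ N) →ₗ[E7 k] E7 k => LinearMap.range f)
          (N.liftQ f0 hker) ?_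
        refine ⟨Submodule.Quotient.mk w, ?_⟩
        show f0 w = c
        simpa [hf0] using hw
      intro r hr
      simp only [Set.mem_insert_iff, Set.mem_singleton_iff] at hr
      rcases hr with rfl | rfl | rfl
      · refine mk_maps (-x) z ?_ x ⟨fun j => if 0 = j then -1 else 0, by simp; ring⟩
        intro w
        rw [hψ, hp]
        simp [Matrix.mulVec, dotProduct, Fin.sum_univ_two]
        linear_combination (w 1 : E7 k) * hrel
      · refine mk_maps z p ?_ p ⟨fun j => if 1 = j then 1 else 0, by simp⟩
        intro w
        rw [hψ, hp]
        simp [Matrix.mulVec, dotProduct, Fin.sum_univ_two]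
        linear_combination (w 0 : E7 k) * hrel
      · refine mk_maps z p ?_ z ⟨fun j => if 0 = j then 1 else 0, by simp⟩
        intro w
        rw [hψ, hp]
        simp [Matrix.mulVec, dotProduct, Fin.sum_univ_two]
        linear_combination (w 0 : E7 k) * hrel
  · apply le_antisymm <;> rw [Ideal.span_le] <;> intro r hr <;>
      simp only [Set.mem_insert_iff, Set.mem_singleton_iff] at hr
    · rcases hr with rfl | rfl | rfl
      · exact Ideal.subset_span (by simp)
      · refine add_mem (Ideal.subset_span (by simp)) ?_
        exact Ideal.pow_mem_of_mem _ (Ideal.subset_span (by simp)) 2 (by norm_num)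
      · exact Ideal.subset_span (by simp)
    · rcases hr with rfl | rfl | rfl
      · exact Ideal.subset_span (by simp)
      · have hx : x ∈ Ideal.span {x, y ^ 3 + x ^ 2, z} := Ideal.subset_span (by simp)
        have hyp : y ^ 3 + x ^ 2 ∈ Ideal.span {x, y ^ 3 + x ^ 2, z} :=
          Ideal.subset_span (by simp)
        have h3 : (y : E7 k) ^ 3 = (y ^ 3 + x ^ 2) - x * x := by ring
        nth_rewrite 2 [h3]
        exact sub_mem hyp (Ideal.mul_mem_right _ _ hx)
      · exact Ideal.subset_span (by simp)
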